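/- Let G=(V,E) be a finite simple graph of order n and let X ⊆ V be a set of vertices such that the induced subgraph G−X is connected. If α is an ordering of G with α⁻¹(1) ∈ V∖X and α⁻¹(n) ∈ V∖X, then prf_α(G, V∖X) ≥ prf_{α_X}(G−X) + |X|. -/

import Mathlib

variable {V : Type*}

/-- The minimum position (in ordering `α`) over the closed neighborhood of `z`. -/
noncomputable def nbhdMin {n : ℕ} (G : SimpleGraph V) (α : V ≃ Fin n) (z : V) : ℕ :=
  sInf {m : ℕ | ∃ w, (w = z ∨ G.Adj w z) ∧ (α w : ℕ) = m}

/-- The profile of a vertex `z` in the ordering `α`. -/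
noncomputable def vtxProfile {n : ℕ} (G : SimpleGraph V) (α : V ≃ Fin n) (z : V) : ℕ :=
  (α z : ℕ) - nbhdMin G α z

/-- The profile of an ordering `α` of `G`. -/
noncomputable def ordProfile [Fintype V] {n : ℕ} (G : SimpleGraph V) (α : V ≃ Fin n) : ℕ :=
  ∑ z : V, vtxProfile G α z

/-- The profile of a graph `G`. -/
noncomputable def profile (G : SimpleGraph V) [Fintype V] : ℕ :=
  sInf {p : ℕ | ∃ α : V ≃ Fin (Fintype.card V), ordProfile G α = p}

section aux
lemma nbhdMin_exists {n : ℕ} (G : SimpleGraph V) (α : V ≃ Fin n) (z : V) :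
    ∃ w, (w = z ∨ G.Adj w z) ∧ (α w : ℕ) = nbhdMin G α z := by
  have h : (α z : ℕ) ∈ {m : ℕ | ∃ w, (w = z ∨ G.Adj w z) ∧ (α w : ℕ) = m} :=
    ⟨z, Or.inl rfl, rfl⟩
  exact Nat.sInf_mem (Set.nonempty_of_mem h)

lemma nbhdMin_le {n : ℕ} (G : SimpleGraph V) (α : V ≃ Fin n) {z w : V}
    (h : w = z ∨ G.Adj w z) : nbhdMin G α z ≤ α w := Nat.sInf_le ⟨w, h, rfl⟩

lemma walk_cross {T : Type*} {H : SimpleGraph T} {f : T → ℕ} {k : ℕ}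
    (hk : ∀ z : T, f z ≠ k) :
    ∀ {s t : T} (_ : H.Walk s t), f s < k → k < f t →
      ∃ u v, H.Adj u v ∧ f u < k ∧ k < f v := by
  intro s t p
  induction p with
  | nil => intro hs ht; exact absurd (hs.trans ht) (lt_irrefl _)
  | @cons a b c h q ih =>
    intro hs ht
    rcases lt_or_ge (f b) k with h' | h'
    · exact ih h' ht
    · exact ⟨a, b, h, hs, lt_of_le_of_ne h' (hk b).symm⟩

lemma count_aux [Fintype V] [DecidableEq V] {X : Finset V} {n m : ℕ}
    (α : V ≃ Fin n) (β : {v : V // v ∉ X} ≃ Fin m)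
    (hβ' : ∀ a b : {v : V // v ∉ X}, (β a : ℕ) < β b ↔ (α ↑a : ℕ) < α ↑b)
    (u z : {v : V // v ∉ X}) :
    ((β z : ℕ) - β u) + (X.filter fun x => (α ↑u : ℕ) < α x ∧ (α x : ℕ) < α ↑z).card
      ≤ (α ↑z : ℕ) - α ↑u := by
  classical
  set AY : Finset V :=
    Finset.univ.filter (fun t : V => t ∉ X ∧ (α ↑u : ℕ) < α t ∧ (α t : ℕ) ≤ α ↑z) with hAY
  set AX : Finset V := X.filter (fun x => (α ↑u : ℕ) < α x ∧ (α x : ℕ) < α ↑z) with hAX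
  have stepA : (β z : ℕ) - β u ≤ AY.card := by
    rw [← Nat.card_Ioc]
    apply Finset.card_le_card_of_surjOn (fun t : V => if h : t ∉ X then (β ⟨t, h⟩ : ℕ) else 0)
    intro p hp
    simp only [Finset.coe_Ioc, Set.mem_Ioc] at hp
    have hpm : p < m := lt_of_le_of_lt hp.2 (β z).isLt
    have hbt : (β (β.symm ⟨p, hpm⟩) : ℕ) = p := by simp
    refine ⟨(β.symm ⟨p, hpm⟩ : {v : V // v ∉ X}), ?_, ?_⟩
    · simp only [hAY, Finset.coe_filter, Set.mem_setOf_eq, Finset.mem_univ, true_and]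
      refine ⟨(β.symm ⟨p, hpm⟩).2, ?_, ?_⟩
      · exact (hβ' u _).mp (by omega)
      · have hne : ¬ ((α ↑z : ℕ) < α ↑(β.symm ⟨p, hpm⟩)) := fun hc =>
          absurd ((hβ' z _).mpr hc) (by omega)
        omega
    · have h2 := (β.symm ⟨p, hpm⟩).2
      show (if h : (β.symm ⟨p, hpm⟩ : V) ∉ X then (β ⟨↑(β.symm ⟨p, hpm⟩), h⟩ : ℕ) else 0) = p
      rw [dif_pos h2]
      have he : (⟨↑(β.symm ⟨p, hpm⟩), h2⟩ : {v : V // v ∉ X}) = β.symm ⟨p, hpm⟩ :=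
        Subtype.ext rfl
      rw [he]
      exact hbt
  have hdisj : Disjoint AY AX := by
    rw [Finset.disjoint_left]
    intro a ha hax
    exact ((Finset.mem_filter.mp ha).2.1) ((Finset.mem_filter.mp hax).1)
  have stepB : AY.card + AX.card ≤ (α ↑z : ℕ) - α ↑u := by
    rw [← Finset.card_union_of_disjoint hdisj, ← Nat.card_Ioc]
    apply Finset.card_le_card_of_injOn (fun t : V => (α t : ℕ))
    · intro a ha
      simp only [Finset.mem_coe, Finset.mem_union, hAY, hAX, Finset.mem_filter, Finset.mem_univ, true_and] at ha
      simp only [Finset.mem_coe, Finset.mem_Ioc]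
      rcases ha with ⟨_, h1, h2⟩ | ⟨_, h1, h2⟩
      · exact ⟨h1, h2⟩
      · exact ⟨h1, le_of_lt h2⟩
    · intro a _ b _ h
      exact α.injective (Fin.ext h)
  calc (β z : ℕ) - β u + AX.card ≤ AY.card + AX.card := Nat.add_le_add_right stepA _
    _ ≤ _ := stepB
end aux


/-- Lemma 2.1: if `G - X` is connected and the first and last vertices of the ordering `α`
lie outside `X`, then the profile of `V ∖ X` in `α` is at least the profile of the induced
ordering of `G - X` plus `|X|`. -/
theorem profile_outside_set [Fintype V] [DecidableEq V] (G : SimpleGraph V) (X : Finset V)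
    (hconn : (G.induce {v : V | v ∉ X}).Connected)
    (α : V ≃ Fin (Fintype.card V))
    (hfirst : ∀ v : V, (∀ u : V, α v ≤ α u) → v ∉ X)
    (hlast : ∀ v : V, (∀ u : V, α u ≤ α v) → v ∉ X)
    (β : {v : V // v ∉ X} ≃ Fin (Fintype.card {v : V // v ∉ X}))
    (hβ : ∀ u v : {v : V // v ∉ X}, β u < β v ↔ α ↑u < α ↑v) :
    ordProfile (G.induce {v : V | v ∉ X}) β + X.card ≤
      ∑ z ∈ Finset.univ.filter (fun v : V => v ∉ X), vtxProfile G α z := by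
  classical
  set H := G.induce {v : V | v ∉ X} with hH
  have hβ' : ∀ a b : {v : V // v ∉ X}, (β a : ℕ) < β b ↔ (α ↑a : ℕ) < α ↑b := by
    intro a b
    exact hβ a b
  -- choose min neighbors
  have hex : ∀ z : {v : V // v ∉ X}, ∃ u : {v : V // v ∉ X},
      (u = z ∨ H.Adj u z) ∧ (β u : ℕ) = nbhdMin H β z := fun z => nbhdMin_exists H β z
  choose w hw1 hw2 using hex
  set c : {v : V // v ∉ X} → ℕ :=
    fun z => (X.filter fun x => (α ↑(w z) : ℕ) < α x ∧ (α x : ℕ) < α ↑z).card with hc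
  -- per-vertex inequality
  have perv : ∀ z : {v : V // v ∉ X}, vtxProfile H β z + c z ≤ vtxProfile G α ↑z := by
    intro z
    have h1 : vtxProfile H β z = (β z : ℕ) - β (w z) := by
      rw [vtxProfile, ← hw2 z]
    have h2 : (β z : ℕ) - β (w z) + c z ≤ (α ↑z : ℕ) - α ↑(w z) :=
      count_aux α β hβ' (w z) z
    have h3 : nbhdMin G α ↑z ≤ α ↑(w z) := by
      apply nbhdMin_le
      rcases hw1 z with h | h
      · exact Or.inl (congrArg _ h)
      · exact Or.inr h
    have h4 : (α ↑z : ℕ) - α ↑(w z) ≤ (α ↑z : ℕ) - nbhdMin G α ↑z :=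
      Nat.sub_le_sub_left h3 _
    rw [h1, vtxProfile]
    omega
  -- covering
  have hcov : ∀ x ∈ X, ∃ z : {v : V // v ∉ X},
      (α ↑(w z) : ℕ) < α x ∧ (α x : ℕ) < α ↑z := by
    intro x hx
    have hn : 0 < Fintype.card V := Fintype.card_pos_iff.mpr ⟨x⟩
    set a := α.symm ⟨0, hn⟩ with ha'
    set b := α.symm ⟨Fintype.card V - 1, Nat.sub_lt hn one_pos⟩ with hb'
    have haa : (α a : ℕ) = 0 := by simp [ha']
    have hbb : (α b : ℕ) = Fintype.card V - 1 := by simp [hb']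
    have ha : a ∉ X := hfirst a (fun u => by rw [Fin.le_def, haa]; exact Nat.zero_le _)
    have hb : b ∉ X := hlast b (fun u => by
      rw [Fin.le_def, hbb]; exact Nat.le_sub_one_of_lt (α u).isLt)
    have hk : ∀ z : {v : V // v ∉ X}, (α ↑z : ℕ) ≠ (α x : ℕ) := by
      intro z h
      exact z.2 (by rw [show (z : V) = x from α.injective (Fin.ext h)]; exact hx)
    have hax : (0 : ℕ) < α x := by
      rcases Nat.eq_zero_or_pos (α x : ℕ) with h | h
      · exact absurd (α.injective (Fin.ext (h.trans haa.symm))) (by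
          intro he; exact ha (he ▸ hx))
      · exact h
    have hxb : (α x : ℕ) < (α b : ℕ) := by
      have h1 : (α x : ℕ) ≤ Fintype.card V - 1 := Nat.le_sub_one_of_lt (α x).isLt
      have h2 : (α x : ℕ) ≠ (α b : ℕ) := fun h => (by
        intro he; exact hb (he ▸ hx) : ¬ x = b) (α.injective (Fin.ext h))
      omega
    obtain ⟨p⟩ := hconn.preconnected ⟨a, ha⟩ ⟨b, hb⟩
    obtain ⟨u, v, hadj, hu, hv⟩ :=
      walk_cross (f := fun z : {v : V // v ∉ X} => (α ↑z : ℕ)) (k := (α x : ℕ)) hk p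
        (by simpa [haa] using hax) (by simpa [hbb] using hxb)
    refine ⟨v, ?_, hv⟩
    have h5 : (β (w v) : ℕ) ≤ β u := by
      rw [hw2 v]
      exact nbhdMin_le H β (Or.inr hadj)
    have h6 : ¬ ((α ↑u : ℕ) < α ↑(w v)) := fun hc =>
      absurd ((hβ' u (w v)).mpr hc) (by omega)
    omega
  have hcover : X.card ≤ ∑ z : {v : V // v ∉ X}, c z := by
    have hsub : X ⊆ Finset.univ.biUnion (fun z : {v : V // v ∉ X} =>
        X.filter fun x => (α ↑(w z) : ℕ) < α x ∧ (α x : ℕ) < α ↑z) := by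
      intro x hx
      obtain ⟨z, h1, h2⟩ := hcov x hx
      exact Finset.mem_biUnion.mpr ⟨z, Finset.mem_univ _, Finset.mem_filter.mpr ⟨hx, h1, h2⟩⟩
    calc X.card ≤ _ := Finset.card_le_card hsub
      _ ≤ ∑ z : {v : V // v ∉ X}, c z := Finset.card_biUnion_le
  calc ordProfile H β + X.card
      ≤ (∑ z : {v : V // v ∉ X}, vtxProfile H β z) + ∑ z : {v : V // v ∉ X}, c z :=
        Nat.add_le_add_left hcover _
    _ = ∑ z : {v : V // v ∉ X}, (vtxProfile H β z + c z) := Finset.sum_add_distrib.symm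
    _ ≤ ∑ z : {v : V // v ∉ X}, vtxProfile G α ↑z := Finset.sum_le_sum fun z _ => perv z
    _ = ∑ z ∈ Finset.univ.filter (fun v : V => v ∉ X), vtxProfile G α z := by
        exact (Finset.sum_subtype (Finset.univ.filter (fun v : V => v ∉ X))
          (fun x => by simp) (fun z => vtxProfile G α z)).symm
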